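/- Let Ω ⊂ ℝ² be open, X = (x_0, y_0) ∈ Ω, and A^X the Aharonov-Bohm magnetic potential at X with flux Φ satisfying Φ/(2π) = 1/2. Then there exists a (a priori multivalued) function θ_X with ∇θ_X = 2A^X such that e^{iθ_X} is single-valued and C^∞ on Ω \ {X} (one may take (x−x_0) + i(y−y_0) = r e^{iθ_X}), and the anti-linear operator K_X = e^{iθ_X} Γ (Γ the complex conjugation Γu = ū) commutes with the Aharonov-Bohm Hamiltonian: K_X Δ_{A^X} = Δ_{A^X} K_X. Consequently −Δ_{A^X} preserves the space of K_X-real functions. -/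

import Mathlib

noncomputable section
open Set MeasureTheory Metric Function Topology ComplexConjugate

/-- Points of the Euclidean plane. -/
abbrev Pt : Type := EuclideanSpace ℝ (Fin 2)

/-! ### Spectral definitions for the Dirichlet Laplacian -/

/-- A (Dirichlet) test function on `Ω`: smooth, compactly supported inside `Ω`. -/
def TestFun (Ω : Set Pt) (u : Pt → ℝ) : Prop :=
  ContDiff ℝ (⊤ : ℕ∞) u ∧ HasCompactSupport u ∧ tsupport u ⊆ Ω

/-- The Rayleigh quotient of a real function on the plane. -/
def rayleigh (u : Pt → ℝ) : ℝ :=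
  (∫ x, ‖fderiv ℝ u x‖ ^ 2) / (∫ x, (u x) ^ 2)

/-- `gse Ω` is the ground state energy (smallest eigenvalue) of the Dirichlet
Laplacian on `Ω`, defined variationally as the infimum of the Rayleigh quotient. -/
def gse (Ω : Set Pt) : ℝ :=
  sInf (rayleigh '' {u | TestFun Ω u ∧ u ≠ 0})

/-- The `k`-th Dirichlet eigenvalue of `Ω`, by the Courant–Fischer min-max principle. -/
def nthEigenvalue (Ω : Set Pt) (k : ℕ) : ℝ :=
  sInf {r : ℝ | ∃ V : Submodule ℝ (Pt → ℝ), Module.finrank ℝ V = k ∧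
    (∀ u ∈ V, u ≠ 0 → TestFun Ω u) ∧
    r = sSup (rayleigh '' {u | u ∈ V ∧ u ≠ 0})}

/-- The (second order) Laplacian of `u` at `x`. -/
def lapl (u : Pt → ℝ) (x : Pt) : ℝ :=
  ∑ j : Fin 2, fderiv ℝ (fun y => fderiv ℝ u y (EuclideanSpace.single j 1)) x
      (EuclideanSpace.single j 1)

/-- `u` is an eigenfunction of the Dirichlet Laplacian on `Ω` with eigenvalue `μ`:
`-Δ u = μ u` in `Ω` and `u = 0` on `∂Ω`. -/
def IsEigenfun (Ω : Set Pt) (μ : ℝ) (u : Pt → ℝ) : Prop :=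
  ContinuousOn u (closure Ω) ∧ ContDiffOn ℝ 2 u Ω ∧
  (∀ x ∈ frontier Ω, u x = 0) ∧
  (∀ x ∈ Ω, lapl u x = -μ * u x) ∧ (∃ x ∈ Ω, u x ≠ 0)

/-- The nodal set `N(u)` of `u` relative to `Ω`. -/
def nodalSet (Ω : Set Pt) (u : Pt → ℝ) : Set Pt := closure {x ∈ Ω | u x = 0}

/-- The nodal domains of `u`: connected components of `Ω \ N(u)`. -/
def nodalDomains (Ω : Set Pt) (u : Pt → ℝ) : Set (Set Pt) :=
  {C | ∃ x ∈ Ω \ nodalSet Ω u, C = connectedComponentIn (Ω \ nodalSet Ω u) x}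

/-- `μ(u)`, the number of nodal domains of `u`. -/
def numNodal (Ω : Set Pt) (u : Pt → ℝ) : ℕ := (nodalDomains Ω u).ncard

/-- `Lk Ω k` is the smallest Dirichlet eigenvalue of `Ω` possessing an eigenfunction
with exactly `k` nodal domains, `+∞` (in `EReal`) if there is none. -/
def Lk (Ω : Set Pt) (k : ℕ) : EReal :=
  sInf ((fun μ : ℝ => (μ : EReal)) '' {μ | ∃ u, IsEigenfun Ω μ u ∧ numNodal Ω u = k})

/-! ### Partitions -/

/-- A `k`-partition of `Ω`: mutually disjoint open connected subsets of `Ω`. -/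
def IsKPartition (Ω : Set Pt) {k : ℕ} (D : Fin k → Set Pt) : Prop :=
  (∀ i, IsOpen (D i)) ∧ (∀ i, D i ⊆ Ω) ∧ (∀ i, IsConnected (D i)) ∧
    Pairwise (Function.onFun Disjoint D)

/-- The energy `Λ(𝒟) = max_i λ(D_i)` of a partition. -/
def energy {k : ℕ} (D : Fin k → Set Pt) : ℝ := ⨆ i, gse (D i)

/-- `𝔏_k(Ω)`, the infimum of `Λ(𝒟)` over all `k`-partitions. -/
def LL (Ω : Set Pt) (k : ℕ) : ℝ :=
  sInf (energy '' {D : Fin k → Set Pt | IsKPartition Ω D})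

/-- A minimal `k`-partition. -/
def IsMinimalPartition (Ω : Set Pt) {k : ℕ} (D : Fin k → Set Pt) : Prop :=
  IsKPartition Ω D ∧ energy D = LL Ω k

/-- `Ω` has piecewise-`C¹` boundary. -/
def PiecewiseC1Boundary (Ω : Set Pt) : Prop :=
  ∃ (n : ℕ) (c : Fin n → ℝ → Pt),
    (∀ i, ContDiffOn ℝ 1 (c i) (Icc (0:ℝ) 1)) ∧
    frontier Ω = ⋃ i, c i '' Icc (0:ℝ) 1

/-- Two elements of a partition are neighbours:
`Int(closure(A ∪ B)) \ ∂Ω` is connected. -/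
def Neighbors (Ω : Set Pt) (A B : Set Pt) : Prop :=
  IsConnected (interior (closure (A ∪ B)) \ frontier Ω)

/-- The graph of the partition is bipartite: it admits a proper `2`-colouring. -/
def BipartiteGraph (Ω : Set Pt) {k : ℕ} (D : Fin k → Set Pt) : Prop :=
  ∃ c : Fin k → Bool, ∀ i j, i ≠ j → Neighbors Ω (D i) (D j) → c i ≠ c j

/-- The boundary set `N(𝒟) = closure(⋃ᵢ (∂Dᵢ ∩ Ω))` of a partition. -/
def boundarySet (Ω : Set Pt) {k : ℕ} (D : Fin k → Set Pt) : Set Pt :=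
  closure (⋃ i, frontier (D i) ∩ Ω)

/-- A strong partition: `Int(closure(⋃ᵢ Dᵢ)) \ ∂Ω = Ω`. -/
def IsStrong (Ω : Set Pt) {k : ℕ} (D : Fin k → Set Pt) : Prop :=
  interior (closure (⋃ i, D i)) \ frontier Ω = Ω

/-! ### Regularity of boundary sets -/

/-- The unit vector of angle `θ`. -/
def unitVec (θ : ℝ) : Pt := (WithLp.equiv 2 (Fin 2 → ℝ)).symm ![Real.cos θ, Real.sin θ]

/-- Near `x`, the set `N` is the union of `ν` smooth curves with one end at `x`,
meeting at `x` with the equal angle property. -/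
def MeetsArcsEqualAngle (N : Set Pt) (x : Pt) (ν : ℕ) : Prop :=
  ∃ ε > (0:ℝ), ∃ γ : Fin ν → ℝ → Pt, ∃ θ₀ : ℝ,
    (∀ j, ContDiff ℝ 1 (γ j)) ∧ (∀ j, γ j 0 = x) ∧
    (∀ j, Function.Injective (γ j)) ∧ (∀ j, deriv (γ j) 0 ≠ 0) ∧
    (∀ j : Fin ν, (‖deriv (γ j) 0‖)⁻¹ • deriv (γ j) 0 =
      unitVec (θ₀ + 2 * Real.pi * (j : ℝ) / (ν : ℝ))) ∧
    N ∩ ball x ε = ⋃ j, γ j '' Ico (0:ℝ) 1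

/-- Near `x`, `N` is (diffeomorphic to) a regular simple curve through `x`. -/
def LocallyRegularCurveAt (N : Set Pt) (x : Pt) : Prop :=
  ∃ ε > (0:ℝ), ∃ γ : ℝ → Pt, ContDiff ℝ 1 γ ∧ Function.Injective γ ∧
    (∀ t, deriv γ t ≠ 0) ∧ γ 0 = x ∧ N ∩ ball x ε = γ '' Ioo (-1:ℝ) 1

/-- Near the boundary point `z`, `N` is the union of `ρ` distinct smooth
half-curves which hit `z`. -/
def MeetsHalfArcs (N : Set Pt) (z : Pt) (ρ : ℕ) : Prop :=
  ∃ ε > (0:ℝ), ∃ γ : Fin ρ → ℝ → Pt,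
    (∀ j, ContDiff ℝ 1 (γ j)) ∧ (∀ j, γ j 0 = z) ∧
    (∀ j, Function.Injective (γ j)) ∧ (∀ j, deriv (γ j) 0 ≠ 0) ∧
    (∀ j j', j ≠ j' →
      (‖deriv (γ j) 0‖)⁻¹ • deriv (γ j) 0 ≠ (‖deriv (γ j') 0‖)⁻¹ • deriv (γ j') 0) ∧
    N ∩ ball z ε = ⋃ j, γ j '' Ico (0:ℝ) 1

/-- `N ⊆ closure U` is a regular boundary set relative to the open set `U`, with
(finite) critical set `X`, boundary points `Y`, and multiplicities `ν`, `ρ`. -/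
def IsRegularBoundarySet (U N : Set Pt) (X Y : Finset Pt) (ν ρ : Pt → ℕ) : Prop :=
  IsClosed N ∧ (X : Set Pt) ⊆ U ∩ N ∧
  (∀ x ∈ X, 3 ≤ ν x ∧ MeetsArcsEqualAngle N x (ν x)) ∧
  (∀ x ∈ (N ∩ U) \ (X : Set Pt), LocallyRegularCurveAt N x) ∧
  (Y : Set Pt) = N ∩ frontier U ∧
  (∀ z ∈ Y, 1 ≤ ρ z ∧ MeetsHalfArcs N z (ρ z))

/-- A regular partition: strong, with regular boundary set. -/
def IsRegularPartition (Ω : Set Pt) {k : ℕ} (D : Fin k → Set Pt) : Prop :=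
  IsStrong Ω D ∧
  ∃ (X Y : Finset Pt) (ν ρ : Pt → ℕ), IsRegularBoundarySet Ω (boundarySet Ω D) X Y ν ρ

/-- The number of connected components of a set. -/
def numComponents (S : Set Pt) : ℕ :=
  {C : Set Pt | ∃ x ∈ S, C = connectedComponentIn S x}.ncard

/-- A set has capacity zero (its `H¹`-capacity vanishes). -/
def CapacityZero (S : Set Pt) : Prop :=
  ∀ ε > (0:ℝ), ∃ u : Pt → ℝ, ContDiff ℝ (⊤ : ℕ∞) u ∧ HasCompactSupport u ∧
    (∃ V : Set Pt, IsOpen V ∧ S ⊆ V ∧ ∀ x ∈ V, 1 ≤ u x) ∧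
    (∫ x, ‖fderiv ℝ u x‖ ^ 2) < ε

/-! ### Aharonov–Bohm Hamiltonians -/

/-- The Aharonov–Bohm magnetic potential with pole `X` and flux `π`
(normalized flux `Φ/2π = 1/2`). -/
def ABpot (X : Pt) : Pt → Fin 2 → ℝ := fun p j =>
  (1 / 2) * (if j = 0 then -(p 1 - X 1) else p 0 - X 0) /
    ((p 0 - X 0) ^ 2 + (p 1 - X 1) ^ 2)

/-- The magnetic potential `A^𝐗 = Σⱼ A^{Xⱼ}` of a configuration of poles. -/
def ABpotSum {ℓ : ℕ} (Xs : Fin ℓ → Pt) : Pt → Fin 2 → ℝ :=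
  fun p j => ∑ i, ABpot (Xs i) p j

/-- The punctured domain `Ω̇_𝐗 = Ω \ 𝐗`. -/
def dotOmega (Ω : Set Pt) {ℓ : ℕ} (Xs : Fin ℓ → Pt) : Set Pt := Ω \ Set.range Xs

/-- The magnetic covariant derivative `(Dⱼ - Aⱼ)u`, `Dⱼ = -i∂ⱼ`. -/
def covDeriv (A : Pt → Fin 2 → ℝ) (j : Fin 2) (u : Pt → ℂ) : Pt → ℂ :=
  fun x => -Complex.I * fderiv ℝ u x (EuclideanSpace.single j 1) - (A x j : ℂ) * u x

/-- The magnetic operator `-Δ_A = Σⱼ (Dⱼ - Aⱼ)²`. -/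
def magOp (A : Pt → Fin 2 → ℝ) (u : Pt → ℂ) : Pt → ℂ :=
  fun x => ∑ j : Fin 2, covDeriv A j (covDeriv A j u) x

/-- `σ` plays the role of `e^{iθ}` with `∇θ = 2A` on `S`:
it is smooth, unimodular, and satisfies `∇σ = i(2A)σ`. -/
def IsGaugePhase (S : Set Pt) (A : Pt → Fin 2 → ℝ) (σ : Pt → ℂ) : Prop :=
  ContDiffOn ℝ (⊤ : ℕ∞) σ S ∧ (∀ x ∈ S, ‖σ x‖ = 1) ∧
    ∀ x ∈ S, ∀ v : Pt, fderiv ℝ σ x v =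
      Complex.I * ((2 * ∑ j, A x j * v j : ℝ) : ℂ) * σ x

/-- `u` is an eigenfunction of the Aharonov–Bohm Hamiltonian on `Ω̇_𝐗`
with eigenvalue `μ`. -/
def IsABEigenfun (Ω : Set Pt) {ℓ : ℕ} (Xs : Fin ℓ → Pt) (μ : ℝ) (u : Pt → ℂ) : Prop :=
  ContinuousOn u (closure (dotOmega Ω Xs)) ∧ ContDiffOn ℝ 2 u (dotOmega Ω Xs) ∧
  (∀ x ∈ frontier Ω, u x = 0) ∧
  (∀ x ∈ dotOmega Ω Xs, magOp (ABpotSum Xs) u x = (μ : ℂ) * u x) ∧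
  (∃ x ∈ dotOmega Ω Xs, u x ≠ 0)

/-- `u` is `K_𝐗`-real: `K_𝐗 u = u` for the anti-linear operator `K_𝐗 = e^{iφ_𝐗}Γ`. -/
def IsKReal (Ω : Set Pt) {ℓ : ℕ} (Xs : Fin ℓ → Pt) (u : Pt → ℂ) : Prop :=
  ∃ σ : Pt → ℂ, IsGaugePhase (dotOmega Ω Xs) (ABpotSum Xs) σ ∧
    ∀ x ∈ dotOmega Ω Xs, σ x * conj (u x) = u x

/-- The zero set of a complex function relative to `S`. -/
def nodalSetC (S : Set Pt) (u : Pt → ℂ) : Set Pt := closure {x ∈ S | u x = 0}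

/-- The nodal domains of a complex function relative to `S`. -/
def nodalDomainsC (S : Set Pt) (u : Pt → ℂ) : Set (Set Pt) :=
  {C | ∃ x ∈ S \ nodalSetC S u, C = connectedComponentIn (S \ nodalSetC S u) x}

/-- `L_k(Ω̇_𝐗)`: the lowest eigenvalue of the Aharonov–Bohm Hamiltonian on `Ω̇_𝐗`
having a `K_𝐗`-real eigenfunction with exactly `k` nodal domains (`+∞` if none). -/
def ABLk (Ω : Set Pt) {ℓ : ℕ} (Xs : Fin ℓ → Pt) (k : ℕ) : EReal :=
  sInf ((fun μ : ℝ => (μ : EReal)) ''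
    {μ | ∃ u, IsABEigenfun Ω Xs μ u ∧ IsKReal Ω Xs u ∧
      (nodalDomainsC (dotOmega Ω Xs) u).ncard = k})

/-- Complex-valued test functions. -/
def TestFunC (Ω : Set Pt) (u : Pt → ℂ) : Prop :=
  ContDiff ℝ (⊤ : ℕ∞) u ∧ HasCompactSupport u ∧ tsupport u ⊆ Ω

/-- The magnetic Rayleigh quotient. -/
def magRayleigh (A : Pt → Fin 2 → ℝ) (u : Pt → ℂ) : ℝ :=
  (∫ x, ∑ j : Fin 2, Complex.normSq (covDeriv A j u x)) / (∫ x, Complex.normSq (u x))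

/-- The `k`-th eigenvalue of the Aharonov–Bohm Hamiltonian on `Ω̇_𝐗`, by min-max. -/
def ABnthEigenvalue (Ω : Set Pt) {ℓ : ℕ} (Xs : Fin ℓ → Pt) (k : ℕ) : ℝ :=
  sInf {r : ℝ | ∃ V : Submodule ℂ (Pt → ℂ), Module.finrank ℂ V = k ∧
    (∀ u ∈ V, u ≠ 0 → TestFunC (dotOmega Ω Xs) u) ∧
    r = sSup (magRayleigh (ABpotSum Xs) '' {u | u ∈ V ∧ u ≠ 0})}


def gph (X : Pt) (p : Pt) : ℂ :=
  (((p 0 - X 0 : ℝ) : ℂ) + ((p 1 - X 1 : ℝ) : ℂ) * Complex.I) *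
    (((Real.sqrt ((p 0 - X 0) ^ 2 + (p 1 - X 1) ^ 2))⁻¹ : ℝ) : ℂ)

lemma r2_pos {X p : Pt} (h : p ≠ X) : 0 < (p 0 - X 0) ^ 2 + (p 1 - X 1) ^ 2 := by
  have h' : p 0 - X 0 ≠ 0 ∨ p 1 - X 1 ≠ 0 := by
    by_contra hc
    push_neg at hc
    apply h
    apply PiLp.ext
    intro j
    fin_cases j
    · show p 0 = X 0; linarith [hc.1]
    · show p 1 = X 1; linarith [hc.2]
  rcases h' with h' | h' <;> rcases h'.lt_or_gt with h' | h' <;> nlinarith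

lemma hasFDerivAt_proj (j : Fin 2) (c : ℝ) (p : Pt) :
    HasFDerivAt (fun q : Pt => q j - c) (EuclideanSpace.proj j : Pt →L[ℝ] ℝ) p :=
  (EuclideanSpace.proj j : Pt →L[ℝ] ℝ).hasFDerivAt.sub_const c

set_option maxHeartbeats 1000000 in
lemma gph_fderiv (X : Pt) {p : Pt} (h : p ≠ X) (v : Pt) :
    fderiv ℝ (gph X) p v
      = Complex.I * ((2 * ∑ j, ABpot X p j * v j : ℝ) : ℂ) * gph X p := by
  have pos := r2_pos h
  have hnpos : 0 < Real.sqrt ((p 0 - X 0) ^ 2 + (p 1 - X 1) ^ 2) := Real.sqrt_pos.mpr pos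
  have hn2 : Real.sqrt ((p 0 - X 0) ^ 2 + (p 1 - X 1) ^ 2) ^ 2
      = (p 0 - X 0) ^ 2 + (p 1 - X 1) ^ 2 := Real.sq_sqrt pos.le
  have h0 := hasFDerivAt_proj 0 (X 0) p
  have h1 := hasFDerivAt_proj 1 (X 1) p
  have hr2m := (h0.mul h0).add (h1.mul h1)
  have hr2 : HasFDerivAt
      (fun q : Pt => (q 0 - X 0) ^ 2 + (q 1 - X 1) ^ 2) _ p :=
    hr2m.congr_of_eventuallyEq (Filter.Eventually.of_forall (fun q => by simp only [Pi.add_apply, Pi.mul_apply]; ring))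
  have hs := (Real.hasDerivAt_sqrt pos.ne').comp_hasFDerivAt p hr2
  have hinv := (hasDerivAt_inv hnpos.ne').comp_hasFDerivAt p hs
  have hc := Complex.ofRealCLM.hasFDerivAt.comp p hinv
  have hz0 := Complex.ofRealCLM.hasFDerivAt.comp p h0
  have hz1 := (Complex.ofRealCLM.hasFDerivAt.comp p h1).mul_const Complex.I
  have hσ := (hz0.add hz1).mul hc
  have hd : HasFDerivAt (gph X) _ p := hσ
  rw [hd.fderiv]
  simp only [ContinuousLinearMap.add_apply, ContinuousLinearMap.smul_apply,
    ContinuousLinearMap.comp_apply, ContinuousLinearMap.coe_smul', Pi.smul_apply,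
    ContinuousLinearMap.smulRight_apply, Complex.ofRealCLM_apply,
    PiLp.proj_apply, smul_eq_mul, Complex.real_smul, Pi.add_apply]
  rw [Fin.sum_univ_two]
  simp only [ABpot, Function.comp_apply, Complex.ofRealCLM_apply,
    show ((1 : Fin 2) = 0) = False by simp, if_false, if_true, gph]
  set a := p 0 - X 0 with ha
  set b := p 1 - X 1 with hb
  set s := Real.sqrt (a ^ 2 + b ^ 2) with hsdef
  have hr2ne : a ^ 2 + b ^ 2 ≠ 0 := pos.ne'
  apply Complex.ext <;>
    simp only [Complex.add_re, Complex.add_im, Complex.mul_re, Complex.mul_im,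
      Complex.I_re, Complex.I_im, Complex.ofReal_re, Complex.ofReal_im] <;>
    field_simp
  · linear_combination (2 * a * (a * v 0 + b * v 1)) * hn2
  · linear_combination (2 * b * (a * v 0 + b * v 1)) * hn2

lemma gph_norm {X p : Pt} (h : p ≠ X) : ‖gph X p‖ = 1 := by
  have pos := r2_pos h
  have hnpos : 0 < Real.sqrt ((p 0 - X 0) ^ 2 + (p 1 - X 1) ^ 2) := Real.sqrt_pos.mpr pos
  rw [gph, norm_mul, Complex.norm_real, Complex.norm_add_mul_I, Real.norm_eq_abs,
    abs_of_pos (inv_pos.mpr hnpos)]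
  rw [inv_eq_one_div]
  field_simp

lemma gph_contDiffAt {X p : Pt} (h : p ≠ X) : ContDiffAt ℝ (⊤ : ℕ∞) (gph X) p := by
  have pos := r2_pos h
  have hnpos : 0 < Real.sqrt ((p 0 - X 0) ^ 2 + (p 1 - X 1) ^ 2) := Real.sqrt_pos.mpr pos
  have h0 : ContDiffAt ℝ (⊤ : ℕ∞) (fun q : Pt => q 0 - X 0) p :=
    ((EuclideanSpace.proj (0 : Fin 2) : Pt →L[ℝ] ℝ).contDiff.sub contDiff_const).contDiffAt
  have h1 : ContDiffAt ℝ (⊤ : ℕ∞) (fun q : Pt => q 1 - X 1) p :=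
    ((EuclideanSpace.proj (1 : Fin 2) : Pt →L[ℝ] ℝ).contDiff.sub contDiff_const).contDiffAt
  have hr2 : ContDiffAt ℝ (⊤ : ℕ∞) (fun q : Pt => (q 0 - X 0) ^ 2 + (q 1 - X 1) ^ 2) p :=
    ((h0.mul h0).add (h1.mul h1)).congr_of_eventuallyEq
      (Filter.Eventually.of_forall (fun q => by ring))
  have hs : ContDiffAt ℝ (⊤ : ℕ∞) (fun q : Pt => Real.sqrt ((q 0 - X 0) ^ 2 + (q 1 - X 1) ^ 2)) p :=
    (Real.contDiffAt_sqrt pos.ne').comp p hr2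
  have hinv := hs.inv hnpos.ne'
  have hc := Complex.ofRealCLM.contDiff.contDiffAt.comp p hinv
  have hz0 := Complex.ofRealCLM.contDiff.contDiffAt.comp p h0
  have hz1 := (Complex.ofRealCLM.contDiff.contDiffAt.comp p h1).mul (contDiffAt_const (c := Complex.I))
  exact (hz0.add hz1).mul hc

lemma gph_gauge (Ω : Set Pt) (X : Pt) :
    IsGaugePhase (Ω \ {X}) (ABpot X) (gph X) := by
  refine ⟨?_, ?_, ?_⟩
  · intro p hp
    exact (gph_contDiffAt (by simpa using hp.2)).contDiffWithinAt
  · intro p hp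
    exact gph_norm (by simpa using hp.2)
  · intro p hp v
    exact gph_fderiv X (by simpa using hp.2) v

lemma covDeriv_congr_nhds {A : Pt → Fin 2 → ℝ} {j : Fin 2} {f g : Pt → ℂ} {x : Pt}
    (h : f =ᶠ[nhds x] g) : covDeriv A j f x = covDeriv A j g x := by
  unfold covDeriv
  rw [h.fderiv_eq, h.eq_of_nhds]

lemma covDeriv_neg {A : Pt → Fin 2 → ℝ} {j : Fin 2} {f : Pt → ℂ} {x : Pt} :
    covDeriv A j (fun y => -(f y)) x = -(covDeriv A j f x) := by
  unfold covDeriv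
  rw [fderiv_fun_neg]
  simp
  ring

lemma single_sum {A : Pt → Fin 2 → ℝ} {x : Pt} (j : Fin 2) :
    (∑ j' : Fin 2, A x j' * (EuclideanSpace.single j (1:ℝ)) j') = A x j := by
  simp [EuclideanSpace.single_apply]

lemma covDeriv_gauge {S : Set Pt} (hS : IsOpen S) {A : Pt → Fin 2 → ℝ} {σ : Pt → ℂ}
    (hσ : IsGaugePhase S A σ) {u : Pt → ℂ} (hu : ContDiffOn ℝ (⊤ : ℕ∞) u S) (j : Fin 2)
    {x : Pt} (hx : x ∈ S) :
    covDeriv A j (fun y => σ y * conj (u y)) x = -(σ x * conj (covDeriv A j u x)) := by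
  have hxn : S ∈ nhds x := hS.mem_nhds hx
  have hσd : DifferentiableAt ℝ σ x := (hσ.1.contDiffAt hxn).differentiableAt (by simp)
  have hud : DifferentiableAt ℝ u x := (hu.contDiffAt hxn).differentiableAt (by simp)
  have hconj : (fun y => conj (u y)) = (Complex.conjCLE ∘ u) := rfl
  have hcud : DifferentiableAt ℝ (fun y => conj (u y)) x := by
    rw [hconj]; exact Complex.conjCLE.differentiable.differentiableAt.comp x hud
  have hfconj : fderiv ℝ (fun y => conj (u y)) x (EuclideanSpace.single j 1)
      = conj (fderiv ℝ u x (EuclideanSpace.single j 1)) := by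
    rw [hconj, Complex.conjCLE.comp_fderiv]
    simp
  unfold covDeriv
  rw [fderiv_fun_mul hσd hcud]
  simp only [ContinuousLinearMap.add_apply, ContinuousLinearMap.coe_smul', Pi.smul_apply,
    smul_eq_mul]
  rw [hfconj, hσ.2.2 x hx (EuclideanSpace.single j 1), single_sum j]
  simp only [map_sub, map_mul, Complex.conj_I, Complex.conj_ofReal, map_neg]
  push_cast
  ring_nf
  linear_combination (-2 * (A x j : ℂ) * σ x * conj (u x)) * Complex.I_sq

lemma ABpot_contDiffAt {X p : Pt} (h : p ≠ X) (j : Fin 2) :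
    ContDiffAt ℝ (⊤ : ℕ∞) (fun q => ABpot X q j) p := by
  have pos := r2_pos h
  have h0 : ContDiffAt ℝ (⊤ : ℕ∞) (fun q : Pt => q 0 - X 0) p :=
    ((EuclideanSpace.proj (0 : Fin 2) : Pt →L[ℝ] ℝ).contDiff.sub contDiff_const).contDiffAt
  have h1 : ContDiffAt ℝ (⊤ : ℕ∞) (fun q : Pt => q 1 - X 1) p :=
    ((EuclideanSpace.proj (1 : Fin 2) : Pt →L[ℝ] ℝ).contDiff.sub contDiff_const).contDiffAt
  have hr2 : ContDiffAt ℝ (⊤ : ℕ∞) (fun q : Pt => (q 0 - X 0) ^ 2 + (q 1 - X 1) ^ 2) p :=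
    ((h0.mul h0).add (h1.mul h1)).congr_of_eventuallyEq
      (Filter.Eventually.of_forall (fun q => by ring))
  unfold ABpot
  by_cases hj : j = 0 <;> simp only [hj, if_true, if_false, reduceIte]
  · exact ((contDiffAt_const (c := (1:ℝ)/2)).mul h1.neg).div hr2 pos.ne'
  · exact ((contDiffAt_const (c := (1:ℝ)/2)).mul h0).div hr2 pos.ne'

lemma covDeriv_contDiffOn {S : Set Pt} (hS : IsOpen S) {A : Pt → Fin 2 → ℝ} (j : Fin 2)
    (hA : ContDiffOn ℝ (⊤ : ℕ∞) (fun p => A p j) S) {u : Pt → ℂ} (hu : ContDiffOn ℝ (⊤ : ℕ∞) u S) :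
    ContDiffOn ℝ (⊤ : ℕ∞) (covDeriv A j u) S := by
  have hfd : ContDiffOn ℝ (⊤ : ℕ∞) (fderiv ℝ u) S := hu.fderiv_of_isOpen hS (by simp)
  have happ' := (ContinuousLinearMap.apply ℝ ℂ (EuclideanSpace.single j (1:ℝ) : Pt)).contDiff.comp_contDiffOn hfd
  have happ : ContDiffOn ℝ (⊤ : ℕ∞) (fun x => fderiv ℝ u x (EuclideanSpace.single j 1)) S := happ'
  have hAc : ContDiffOn ℝ (⊤ : ℕ∞) (fun x => ((A x j : ℝ) : ℂ)) S :=
    Complex.ofRealCLM.contDiff.comp_contDiffOn hA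
  exact ((contDiffOn_const (c := -Complex.I)).mul happ).sub (hAc.mul hu)

lemma magOp_gauge {S : Set Pt} (hS : IsOpen S) {A : Pt → Fin 2 → ℝ} {σ : Pt → ℂ}
    (hσ : IsGaugePhase S A σ) (hA : ∀ j, ContDiffOn ℝ (⊤ : ℕ∞) (fun p => A p j) S)
    {u : Pt → ℂ} (hu : ContDiffOn ℝ (⊤ : ℕ∞) u S) {x : Pt} (hx : x ∈ S) :
    magOp A (fun y => σ y * conj (u y)) x = σ x * conj (magOp A u x) := by
  unfold magOp
  rw [map_sum, Finset.mul_sum]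
  refine Finset.sum_congr rfl (fun j _ => ?_)
  have hcd : ContDiffOn ℝ (⊤ : ℕ∞) (covDeriv A j u) S := covDeriv_contDiffOn hS j (hA j) hu
  have hev : covDeriv A j (fun y => σ y * conj (u y))
      =ᶠ[nhds x] (fun y => -(σ y * conj (covDeriv A j u y))) :=
    Filter.eventuallyEq_of_mem (hS.mem_nhds hx)
      (fun y hy => covDeriv_gauge hS hσ hu j hy)
  calc covDeriv A j (covDeriv A j fun y => σ y * conj (u y)) x
      = covDeriv A j (fun y => -(σ y * conj (covDeriv A j u y))) x :=
        covDeriv_congr_nhds hev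
    _ = -(covDeriv A j (fun y => σ y * conj (covDeriv A j u y)) x) := covDeriv_neg
    _ = σ x * conj (covDeriv A j (covDeriv A j u) x) := by
        rw [covDeriv_gauge hS hσ hcd j hx]; ring

lemma magOp_congr_on {S : Set Pt} (hS : IsOpen S) {A : Pt → Fin 2 → ℝ} {f g : Pt → ℂ}
    (h : ∀ y ∈ S, f y = g y) {x : Pt} (hx : x ∈ S) : magOp A f x = magOp A g x := by
  unfold magOp
  refine Finset.sum_congr rfl (fun j _ => ?_)
  refine covDeriv_congr_nhds (Filter.eventuallyEq_of_mem (hS.mem_nhds hx) (fun y hy => ?_))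
  exact covDeriv_congr_nhds (Filter.eventuallyEq_of_mem (hS.mem_nhds hy) h)

/-- For an open set `Ω ⊂ ℝ²` and a pole `X ∈ Ω`, with the
Aharonov–Bohm potential `A^X` of normalized flux `Φ/2π = 1/2`, there is a
function `σ = e^{iθ_X}` (with `∇θ_X = 2A^X`, `σ` single-valued, unimodular and
`C^∞` on `Ω \ {X}`) such that the anti-linear operator `K_X u = σ ū` commutes
with the Aharonov–Bohm Hamiltonian `-Δ_{A^X}`; consequently `-Δ_{A^X}`
preserves the `K_X`-real functions. -/
theorem KX_commutes_with_AB_hamiltonian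
    (Ω : Set Pt) (hΩ : IsOpen Ω) (X : Pt) (hX : X ∈ Ω) :
    ∃ σ : Pt → ℂ, IsGaugePhase (Ω \ {X}) (ABpot X) σ ∧
      (∀ u : Pt → ℂ, ContDiffOn ℝ (⊤ : ℕ∞) u (Ω \ {X}) → ∀ x ∈ Ω \ {X},
        magOp (ABpot X) (fun y => σ y * conj (u y)) x
          = σ x * conj (magOp (ABpot X) u x)) ∧
      (∀ u : Pt → ℂ, ContDiffOn ℝ (⊤ : ℕ∞) u (Ω \ {X}) →
        (∀ x ∈ Ω \ {X}, σ x * conj (u x) = u x) →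
        ∀ x ∈ Ω \ {X}, σ x * conj (magOp (ABpot X) u x) = magOp (ABpot X) u x) := by
  
  have hS : IsOpen (Ω \ {X}) := hΩ.sdiff isClosed_singleton
  have hA : ∀ j, ContDiffOn ℝ (⊤ : ℕ∞) (fun p => ABpot X p j) (Ω \ {X}) :=
    fun j p hp => (ABpot_contDiffAt (by simpa using hp.2) j).contDiffWithinAt
  refine ⟨gph X, gph_gauge Ω X, fun u hu x hx => magOp_gauge hS (gph_gauge Ω X) hA hu hx,
    fun u hu hK x hx => ?_⟩
  rw [← magOp_gauge hS (gph_gauge Ω X) hA hu hx]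
  exact magOp_congr_on hS hK hx
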